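/- Let a, b > 0 and let m, n be real numbers with q := 2m − 1 − n > 0, and set c = 2a/(b² q). Define P(x) = x^{−2m} exp(−c x^{−q}) on (0,∞). Then for every x > 0 the zero-flux stationary Fokker–Planck equation of the gCEV process holds: 2 a x^n P(x) = d/dx ( b² x^{2m} P(x) ). -/

import Mathlib

/-- For `a, b > 0`, `q = 2m − 1 − n > 0` and `c = 2a/(b² q)`,
the function `P(x) = x^{−2m} exp(−c x^{−q})` satisfies the zero-flux
stationary Fokker–Planck equation of the gCEV process:
`2 a x^n P(x) = d/dx (b² x^{2m} P(x))` for every `x > 0`. -/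
theorem gCEV_stationary_FokkerPlanck
    (a b m n q c : ℝ) (ha : 0 < a) (hb : 0 < b)
    (hq : q = 2 * m - 1 - n) (hq_pos : 0 < q)
    (hc : c = 2 * a / (b ^ 2 * q)) (P : ℝ → ℝ)
    (hP : ∀ x > (0 : ℝ), P x = x ^ (-(2 * m)) * Real.exp (-(c * x ^ (-q)))) :
    ∀ x > (0 : ℝ),
      HasDerivAt (fun y : ℝ => b ^ 2 * y ^ (2 * m) * P y) (2 * a * x ^ n * P x) x := by
  intro x hx
  have hx0 : x ≠ 0 := ne_of_gt hx
  -- derivative of y ↦ y^(-q)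
  have h1 : HasDerivAt (fun y : ℝ => y ^ (-q)) (-q * x ^ (-q - 1)) x :=
    Real.hasDerivAt_rpow_const (Or.inl hx0)
  have h2 : HasDerivAt (fun y : ℝ => -(c * y ^ (-q))) (-(c * (-q * x ^ (-q - 1)))) x :=
    (h1.const_mul c).neg
  have h3 : HasDerivAt (fun y : ℝ => Real.exp (-(c * y ^ (-q))))
      (Real.exp (-(c * x ^ (-q))) * -(c * (-q * x ^ (-q - 1)))) x := h2.exp
  have h4 : HasDerivAt (fun y : ℝ => b ^ 2 * Real.exp (-(c * y ^ (-q))))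
      (b ^ 2 * (Real.exp (-(c * x ^ (-q))) * -(c * (-q * x ^ (-q - 1))))) x := h3.const_mul _
  -- the two functions agree near x
  have heq : (fun y : ℝ => b ^ 2 * y ^ (2 * m) * P y)
      =ᶠ[nhds x] (fun y : ℝ => b ^ 2 * Real.exp (-(c * y ^ (-q)))) := by
    filter_upwards [eventually_gt_nhds hx] with y hy
    rw [hP y hy, Real.rpow_neg hy.le]
    have hy2m : y ^ (2 * m) ≠ 0 := (Real.rpow_pos_of_pos hy _).ne'
    field_simp
  have hder := h4.congr_of_eventuallyEq heq
  -- identify the derivative value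
  have hval : b ^ 2 * (Real.exp (-(c * x ^ (-q))) * -(c * (-q * x ^ (-q - 1))))
      = 2 * a * x ^ n * P x := by
    rw [hP x hx]
    have hbq : b ^ 2 * c * q = 2 * a := by
      rw [hc]; field_simp
    have hpow : x ^ n * x ^ (-(2 * m)) = x ^ (-q - 1) := by
      rw [← Real.rpow_add hx]; congr 1; rw [hq]; ring
    calc b ^ 2 * (Real.exp (-(c * x ^ (-q))) * -(c * (-q * x ^ (-q - 1))))
        = (b ^ 2 * c * q) * (x ^ n * x ^ (-(2 * m))) * Real.exp (-(c * x ^ (-q))) := by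
          rw [hpow]; ring
      _ = 2 * a * x ^ n * (x ^ (-(2 * m)) * Real.exp (-(c * x ^ (-q)))) := by
          rw [hbq]; ring
  rw [← hval]
  exact hder
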